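/- Let Ω be an eventually outward finitely branched tree quiver and 𝒞 the set of connected full subquivers of Ω. The relation on 𝒞 given by α > β iff β is obtained from α by a finite nonempty sequence of reductions and enhancements is a well-founded strict partial order (transitive, irreflexive, asymmetric, with no infinite strictly decreasing chains). -/

import Mathlib

attribute [local instance] Classical.propDecidable

/-- A quiver in the sense of the paper: a set of vertices, a set of arrows,
and source and target functions. -/
structure Qvr where
  V : Type
  A : Type
  s : A → V
  t : A → V

namespace Qvr

variable (Ω : Qvr)

/-- The underlying (simple) graph of a quiver: `i` and `j` are adjacent iff they are joined
by some arrow. -/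
def graph : SimpleGraph Ω.V where
  Adj i j := i ≠ j ∧ ∃ a, (Ω.s a = i ∧ Ω.t a = j) ∨ (Ω.s a = j ∧ Ω.t a = i)
  symm := by
    constructor
    rintro i j ⟨h1, a, h2⟩
    exact ⟨h1.symm, a, h2.symm⟩
  loopless := by
    constructor
    rintro i ⟨h1, -⟩
    exact h1 rfl

/-- The quiver "has an underlying graph": no arrow is a loop, and each pair of vertices is
joined by at most one arrow. -/
def Simple : Prop :=
  (∀ a, Ω.s a ≠ Ω.t a) ∧
    ∀ a b, ({Ω.s a, Ω.t a} : Set Ω.V) = {Ω.s b, Ω.t b} → a = b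

/-- A vertex `i` is *behind* the arrow `e` if it lies in the connected component of `s e`
after the (edge of the) arrow `e` is removed from the underlying graph. -/
def Behind (e : Ω.A) (i : Ω.V) : Prop :=
  ((Ω.graph.deleteEdges {s(Ω.s e, Ω.t e)}).Reachable (Ω.s e) i)

/-- A vertex `i` is *in front of* the arrow `e` if it lies in the connected component of
`t e` after the (edge of the) arrow `e` is removed from the underlying graph. -/
def InFront (e : Ω.A) (i : Ω.V) : Prop :=
  ((Ω.graph.deleteEdges {s(Ω.s e, Ω.t e)}).Reachable (Ω.t e) i)

/-- The arrow `f` is behind the arrow `e` (both of its endpoints are). -/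
def ABehind (f e : Ω.A) : Prop := Ω.Behind e (Ω.s f) ∧ Ω.Behind e (Ω.t f)

/-- The arrow `e` is in front of the arrow `f` (both of its endpoints are). -/
def AInFront (e f : Ω.A) : Prop := Ω.InFront f (Ω.s e) ∧ Ω.InFront f (Ω.t e)

/-- The strict relation `≺` on arrows: `f ≺ e` iff `f` is behind `e` and `e` is in front
of `f`. -/
def Prec (f e : Ω.A) : Prop := Ω.ABehind f e ∧ Ω.AInFront e f

/-- A (finite or one-sided infinite) journey in `Ω`: a walk together with a starting vertex.
It visits the vertices `vtx 0, vtx 1, …, vtx len` (all `n : ℕ` when `len = ⊤`), crossing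
for each `n < len` the arrow `arr n`, which joins `vtx n` and `vtx (n+1)` in some direction.
(The values of `vtx` and `arr` beyond `len` are irrelevant.) -/
structure Journey (Ω : Qvr) where
  len : ℕ∞
  vtx : ℕ → Ω.V
  arr : ℕ → Ω.A
  compat : ∀ n : ℕ, (n : ℕ∞) < len →
    (Ω.s (arr n) = vtx n ∧ Ω.t (arr n) = vtx (n + 1)) ∨
      (Ω.s (arr n) = vtx (n + 1) ∧ Ω.t (arr n) = vtx n)

/-- A journey is injective if it visits no vertex twice. -/
def Journey.Inj {Ω : Qvr} (w : Journey Ω) : Prop :=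
  ∀ m n : ℕ, (m : ℕ∞) ≤ w.len → (n : ℕ∞) ≤ w.len → w.vtx m = w.vtx n → m = n

/-- The `n`-th arrow of the journey `w` is oriented inconsistently (crossed from target to
source). -/
def Journey.Inconsistent {Ω : Qvr} (w : Journey Ω) (n : ℕ) : Prop :=
  Ω.s (w.arr n) = w.vtx (n + 1) ∧ Ω.t (w.arr n) = w.vtx n

/-- `Ω` is eventually outward if every injective journey contains at most finitely many
arrows oriented inconsistently. -/
def EventuallyOutward : Prop :=
  ∀ w : Journey Ω, w.Inj → {n : ℕ | (n : ℕ∞) < w.len ∧ w.Inconsistent n}.Finite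

/-- `Ω` is finitely branched if it is the union of finitely many injective walks
(equivalently, journeys). -/
def FinitelyBranched : Prop :=
  ∃ (k : ℕ) (J : Fin k → Journey Ω), (∀ m, (J m).Inj) ∧
    (∀ i : Ω.V, ∃ (m : Fin k) (n : ℕ), (n : ℕ∞) ≤ (J m).len ∧ (J m).vtx n = i) ∧
    (∀ a : Ω.A, ∃ (m : Fin k) (n : ℕ), (n : ℕ∞) < (J m).len ∧ (J m).arr n = a)

end Qvr

namespace Qvr

variable (Ω : Qvr)

/-- `S` is the vertex set of a connected (full) subquiver: any two of its vertices are
joined by a walk inside `S`. -/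
def ConnSub (S : Set Ω.V) : Prop :=
  ∀ (i : Ω.V) (hi : i ∈ S) (j : Ω.V) (hj : j ∈ S),
    (Ω.graph.induce S).Reachable ⟨i, hi⟩ ⟨j, hj⟩

/-- The arrow `e` points towards the (full) subquiver with vertex set `S`:
all of `S` lies in front of `e`. -/
def PointsToward (e : Ω.A) (S : Set Ω.V) : Prop := ∀ i ∈ S, Ω.InFront e i

/-- `β` is a *reduction* of `α`: there is an arrow `e` contained in `α` such that `β` is the
portion of `α` behind `e`. -/
def Reduction (α β : Set Ω.V) : Prop :=
  ∃ e : Ω.A, Ω.s e ∈ α ∧ Ω.t e ∈ α ∧ β = {i ∈ α | Ω.Behind e i}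

/-- `β` is an *enhancement* of `α`: there is an arrow `e` contained in `β` such that `α` is
the portion of `β` in front of `e`. -/
def Enhancement (α β : Set Ω.V) : Prop :=
  ∃ e : Ω.A, Ω.s e ∈ β ∧ Ω.t e ∈ β ∧ α = {i ∈ β | Ω.InFront e i}

/-- A single move: `β` is obtained from `α` by a reduction or an enhancement. -/
def Move (α β : Set Ω.V) : Prop := Ω.Reduction α β ∨ Ω.Enhancement α β

/-- The set `𝒞` of connected full subquivers of `Ω` (recorded by their vertex sets). -/
def CC (Ω : Qvr) := {S : Set Ω.V // Ω.ConnSub S}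

/-- The strict order on `𝒞`: `α > β` iff `β` is obtained from `α` by a finite nonempty
sequence of reductions and enhancements. -/
def GtC : Ω.CC → Ω.CC → Prop :=
  Relation.TransGen fun x y : Ω.CC => Ω.Move x.1 y.1

end Qvr

namespace Qvr

variable {Ω : Qvr}

lemma adj_st (hS : Ω.Simple) (e : Ω.A) : Ω.graph.Adj (Ω.s e) (Ω.t e) :=
  ⟨hS.1 e, e, Or.inl ⟨rfl, rfl⟩⟩

lemma behind_self (e : Ω.A) : Ω.Behind e (Ω.s e) := SimpleGraph.Reachable.refl _

lemma infront_self (e : Ω.A) : Ω.InFront e (Ω.t e) := SimpleGraph.Reachable.refl _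

lemma not_behind_and_infront (hS : Ω.Simple) (hT : Ω.graph.IsTree) {e : Ω.A} {i : Ω.V}
    (hb : Ω.Behind e i) (hf : Ω.InFront e i) : False := by
  have hbridge : Ω.graph.IsBridge s(Ω.s e, Ω.t e) := by
    exact (SimpleGraph.isAcyclic_iff_forall_edge_isBridge).mp hT.IsAcyclic
      (Ω.graph.mem_edgeSet.mpr (adj_st hS e))
  have h2 := (SimpleGraph.isBridge_iff).mp hbridge
  exact h2 (hb.trans hf.symm)

lemma behind_or_infront (hT : Ω.graph.IsTree) (e : Ω.A) (i : Ω.V) :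
    Ω.Behind e i ∨ Ω.InFront e i := by
  have closed : ∀ {x y : Ω.V}, (Ω.Behind e x ∨ Ω.InFront e x) → Ω.graph.Adj x y →
      (Ω.Behind e y ∨ Ω.InFront e y) := by
    intro x y hx hadj
    by_cases hedge : s(x, y) = s(Ω.s e, Ω.t e)
    · rcases Sym2.eq_iff.mp hedge with ⟨-, rfl⟩ | ⟨-, rfl⟩
      · exact Or.inr (infront_self e)
      · exact Or.inl (behind_self e)
    · have hadj' : (Ω.graph.deleteEdges {s(Ω.s e, Ω.t e)}).Adj x y :=
        SimpleGraph.deleteEdges_adj.mpr ⟨hadj, by simpa using hedge⟩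
      rcases hx with hx | hx
      · exact Or.inl (hx.trans hadj'.reachable)
      · exact Or.inr (hx.trans hadj'.reachable)
  have key : ∀ {u v : Ω.V} (_ : Ω.graph.Walk u v),
      (Ω.Behind e u ∨ Ω.InFront e u) → (Ω.Behind e v ∨ Ω.InFront e v) := by
    intro u v w
    induction w with
    | nil => exact id
    | cons h p ih => exact fun hu => ih (closed hu h)
  obtain ⟨w⟩ := hT.isConnected (Ω.s e) i
  exact key w (Or.inl (behind_self e))


lemma crossing_edge (hS : Ω.Simple) (hT : Ω.graph.IsTree) {e : Ω.A} {x y : Ω.V}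
    (hx : Ω.InFront e x) (hy : Ω.Behind e y) (hadj : Ω.graph.Adj x y) :
    s(x, y) = s(Ω.s e, Ω.t e) := by
  by_contra hedge
  have hadj' : (Ω.graph.deleteEdges {s(Ω.s e, Ω.t e)}).Adj x y :=
    SimpleGraph.deleteEdges_adj.mpr ⟨hadj, by simpa using hedge⟩
  exact not_behind_and_infront hS hT (hy.trans hadj'.symm.reachable) hx

/-- If an arrow `a` joins a vertex in front of `e` with a vertex behind `e`, then `a = e`,
oriented with source behind. -/
lemma arrow_eq_of_crossing (hS : Ω.Simple) (hT : Ω.graph.IsTree) {e a : Ω.A} {x y : Ω.V}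
    (hor : (Ω.s a = x ∧ Ω.t a = y) ∨ (Ω.s a = y ∧ Ω.t a = x))
    (hx : Ω.InFront e x) (hy : Ω.Behind e y) :
    a = e ∧ Ω.s a = y ∧ Ω.t a = x := by
  have hxy : x ≠ y := by
    rintro rfl
    exact not_behind_and_infront hS hT hy hx
  have hadj : Ω.graph.Adj x y := ⟨hxy, a, by tauto⟩
  have hedge := crossing_edge hS hT hx hy hadj
  have hsets : ({Ω.s a, Ω.t a} : Set Ω.V) = {Ω.s e, Ω.t e} := by
    rcases Sym2.eq_iff.mp hedge with ⟨h1, h2⟩ | ⟨h1, h2⟩ <;>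
      rcases hor with ⟨h3, h4⟩ | ⟨h3, h4⟩ <;>
      · simp [h1, h2, h3, h4, Set.pair_comm]
  have hae : a = e := hS.2 a e hsets
  subst hae
  rcases hor with ⟨h3, h4⟩ | h
  · exfalso
    rw [← h3] at hx
    exact not_behind_and_infront hS hT (behind_self a) hx
  · exact ⟨rfl, h⟩

lemma reachable_of_mem_support {V : Type} {G : SimpleGraph V} {u v w : V}
    (p : G.Walk u v) (h : w ∈ p.support) : G.Reachable u w :=
  ⟨p.takeUntil w h⟩

/-- Key monotonicity: if `f` is behind `e` (at least its source), while both endpoints of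
`e` are in front of `f`, then everything behind `f` is behind `e`. -/
lemma behind_mono (hS : Ω.Simple) (hT : Ω.graph.IsTree) {f e : Ω.A}
    (h1 : Ω.Behind e (Ω.s f)) (h2 : Ω.AInFront e f) :
    ∀ i, Ω.Behind f i → Ω.Behind e i := by
  intro i hi
  obtain ⟨w⟩ := hi
  have hsupp : ∀ v ∈ w.support, Ω.Behind f v := fun v hv =>
    reachable_of_mem_support w hv
  have hne : s(Ω.s e, Ω.t e) ∉ w.edges := by
    intro hmem
    exact not_behind_and_infront hS hT (hsupp _ (w.fst_mem_support_of_mem_edges hmem)) h2.1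
  have hW := w.transfer (Ω.graph.deleteEdges {s(Ω.s e, Ω.t e)}) (by
    intro ed hed
    have h3 : ed ∈ (Ω.graph.deleteEdges {s(Ω.s f, Ω.t f)}).edgeSet := w.edges_subset_edgeSet hed
    rw [SimpleGraph.edgeSet_deleteEdges] at h3 ⊢
    refine ⟨h3.1, ?_⟩
    simp only [Set.mem_singleton_iff]
    rintro rfl
    exact hne hed)
  exact h1.trans ⟨hW⟩


/-- A connected set containing the target but not the source of `f` lies in front of `f`. -/
lemma connsub_subset_infront {β : Set Ω.V} (hβ : Ω.ConnSub β) {f : Ω.A}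
    (ht : Ω.t f ∈ β) (hs : Ω.s f ∉ β) : ∀ i ∈ β, Ω.InFront f i := by
  intro i hi
  obtain ⟨w⟩ := hβ (Ω.t f) ht i hi
  set w' := w.map (SimpleGraph.Embedding.induce β).toHom with hw'
  have hsupp : ∀ v ∈ w'.support, v ∈ β := by
    rw [hw']
    intro v hv
    rw [SimpleGraph.Walk.support_map] at hv
    obtain ⟨u, _, rfl⟩ := List.mem_map.mp hv
    exact u.2
  have hW := w'.transfer (Ω.graph.deleteEdges {s(Ω.s f, Ω.t f)}) (by
    intro ed hed
    rw [SimpleGraph.edgeSet_deleteEdges]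
    refine ⟨w'.edges_subset_edgeSet hed, ?_⟩
    simp only [Set.mem_singleton_iff]
    rintro rfl
    exact hs (hsupp _ (w'.fst_mem_support_of_mem_edges hed)))
  exact ⟨hW⟩

/-- A piece of an injective journey is a path in the underlying graph whose support is
exactly the set of vertices visited. -/
lemma journey_walkSeg {J : Journey Ω} (hJ : J.Inj) (a : ℕ) :
    ∀ c : ℕ, a ≤ c → (c : ℕ∞) ≤ J.len →
      ∃ W : Ω.graph.Walk (J.vtx a) (J.vtx c), W.IsPath ∧
        (∀ b, a ≤ b → b ≤ c → J.vtx b ∈ W.support) ∧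
        (∀ v ∈ W.support, ∃ b, a ≤ b ∧ b ≤ c ∧ J.vtx b = v) := by
  intro c
  induction c with
  | zero =>
    intro hac _
    interval_cases a
    refine ⟨SimpleGraph.Walk.nil, SimpleGraph.Walk.IsPath.nil, ?_, ?_⟩
    · intro b hb1 hb2
      interval_cases b
      simp
    · intro v hv
      simp only [SimpleGraph.Walk.support_nil, List.mem_singleton] at hv
      exact ⟨0, le_rfl, le_rfl, hv.symm⟩
  | succ c ih =>
    intro hac hlen
    have hclen : (c : ℕ∞) ≤ J.len := le_trans (by exact_mod_cast Nat.cast_le.mpr (Nat.le_succ c)) hlen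
    rcases Nat.lt_or_ge a (c+1) with hlt | hge
    · have hac' : a ≤ c := Nat.lt_succ_iff.mp hlt
      obtain ⟨W, hWpath, hWmem, hWrange⟩ := ih hac' hclen
      have hcl : (c : ℕ∞) < J.len := lt_of_lt_of_le (by exact_mod_cast Nat.lt_succ_self c) hlen
      have hadj : Ω.graph.Adj (J.vtx c) (J.vtx (c+1)) := by
        have hne : J.vtx c ≠ J.vtx (c+1) := by
          intro h
          exact absurd (hJ c (c+1) hclen hlen h) (by omega)
        exact ⟨hne, J.arr c, J.compat c hcl⟩
      have hnotmem : J.vtx (c+1) ∉ W.support := by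
        intro hmem
        obtain ⟨b, hb1, hb2, hb3⟩ := hWrange _ hmem
        have : b = c + 1 := hJ b (c+1) (le_trans (Nat.cast_le.mpr hb2) hclen) hlen hb3
        omega
      refine ⟨W.concat hadj, ?_, ?_, ?_⟩
      · rw [SimpleGraph.Walk.isPath_def, SimpleGraph.Walk.support_concat]
        rw [SimpleGraph.Walk.isPath_def] at hWpath
        simp [List.nodup_append, hWpath, hnotmem]
        exact fun x hx h => hnotmem (h ▸ hx)
      · intro b hb1 hb2
        rw [SimpleGraph.Walk.support_concat]
        rcases Nat.lt_or_ge b (c+1) with h | h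
        · exact List.mem_append.mpr (Or.inl (hWmem b hb1 (by omega)))
        · have hb : b = c + 1 := by omega
          subst hb
          exact List.mem_append.mpr (Or.inr (by simp))
      · intro v hv
        rw [SimpleGraph.Walk.support_concat] at hv
        rcases List.mem_append.mp hv with h | h
        · obtain ⟨b, hb1, hb2, hb3⟩ := hWrange v h
          exact ⟨b, hb1, by omega, hb3⟩
        · refine ⟨c+1, by omega, le_rfl, ?_⟩
          simp only [List.mem_singleton] at h
          exact h.symm
    · have ha : a = c + 1 := by omega
      subst ha
      refine ⟨SimpleGraph.Walk.nil, SimpleGraph.Walk.IsPath.nil, ?_, ?_⟩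
      · intro b hb1 hb2
        have hb : b = c + 1 := by omega
        subst hb; simp
      · intro v hv
        simp only [SimpleGraph.Walk.support_nil, List.mem_singleton] at hv
        exact ⟨c + 1, le_rfl, le_rfl, hv.symm⟩


/-- The set of times at which an injective journey is inside a connected set is an
interval. -/
lemma journey_interval (hT : Ω.graph.IsTree) {J : Journey Ω} (hJ : J.Inj)
    {α : Set Ω.V} (hα : Ω.ConnSub α) {a b c : ℕ} (hab : a ≤ b) (hbc : b ≤ c)
    (hc : (c : ℕ∞) ≤ J.len) (ha' : J.vtx a ∈ α) (hc' : J.vtx c ∈ α) : J.vtx b ∈ α := by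
  obtain ⟨W, hWpath, hWmem, -⟩ := journey_walkSeg hJ a c (le_trans hab hbc) hc
  obtain ⟨w0⟩ := hα (J.vtx a) ha' (J.vtx c) hc'
  set w1 := w0.map (SimpleGraph.Embedding.induce α).toHom with hw1
  have hsupp1 : ∀ v ∈ w1.support, v ∈ α := by
    rw [hw1]
    intro v hv
    rw [SimpleGraph.Walk.support_map] at hv
    obtain ⟨u, _, rfl⟩ := List.mem_map.mp hv
    exact u.2
  obtain ⟨p, -, hup⟩ := hT.existsUnique_path (J.vtx a) (J.vtx c)
  have h1 : W = p := hup W hWpath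
  have hcopyPath : (w1.toPath.val.copy rfl rfl : Ω.graph.Walk (J.vtx a) (J.vtx c)).IsPath := by
    erw [SimpleGraph.Walk.isPath_copy]
    exact w1.toPath.2
  have h2 : (w1.toPath.val.copy rfl rfl : Ω.graph.Walk (J.vtx a) (J.vtx c)) = p :=
    hup _ hcopyPath
  have hb := hWmem b hab hbc
  erw [h1, ← h2, SimpleGraph.Walk.support_copy] at hb
  exact hsupp1 _ (w1.support_toPath_subset hb)

/-- Discrete intermediate value: a true-to-false transition. -/
lemma exists_transition (P : ℕ → Prop) {a b : ℕ} (hab : a ≤ b) (ha : P a) (hb : ¬ P b) :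
    ∃ q, a ≤ q ∧ q < b ∧ P q ∧ ¬ P (q + 1) := by
  induction b with
  | zero =>
    interval_cases a
    exact absurd ha hb
  | succ b ih =>
    by_cases hPb : P b
    · have hab' : a ≤ b := by
        rcases Nat.lt_or_ge a (b+1) with h | h
        · omega
        · have : a = b + 1 := by omega
          subst this
          exact absurd ha hb
      exact ⟨b, hab', Nat.lt_succ_self b, hPb, hb⟩
    · rcases Nat.lt_or_ge a (b+1) with h | h
      · obtain ⟨q, h1, h2, h3, h4⟩ := ih (by omega) hPb
        exact ⟨q, h1, by omega, h3, h4⟩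
      · have : a = b + 1 := by omega
        subst this
        exact absurd ha hb

/-- If a journey is in front of `e` at time `p` and behind `e` at a later time `p'`, then
somewhere in between it crosses `e` inconsistently. -/
lemma inconsistent_of_crossing (hS : Ω.Simple) (hT : Ω.graph.IsTree) {J : Journey Ω}
    (hJ : J.Inj) {e : Ω.A} {p p' : ℕ} (hpp : p ≤ p') (hp' : (p' : ℕ∞) ≤ J.len)
    (hfront : Ω.InFront e (J.vtx p)) (hbehind : Ω.Behind e (J.vtx p')) :
    ∃ q, p ≤ q ∧ q < p' ∧ (q : ℕ∞) < J.len ∧ J.arr q = e ∧ J.Inconsistent q := by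
  have hnotP : ¬ Ω.InFront e (J.vtx p') := fun h => not_behind_and_infront hS hT hbehind h
  obtain ⟨q, h1, h2, h3, h4⟩ := exists_transition (fun n => Ω.InFront e (J.vtx n)) hpp hfront hnotP
  have hqlen : (q : ℕ∞) < J.len := lt_of_lt_of_le (by exact_mod_cast h2) hp'
  have hbq : Ω.Behind e (J.vtx (q + 1)) := (behind_or_infront hT e _).resolve_right h4
  obtain ⟨he, hse, hte⟩ := arrow_eq_of_crossing hS hT (J.compat q hqlen) h3 hbq
  exact ⟨q, h1, h2, hqlen, he, hse, hte⟩


lemma exists_descending_of_not_wf {X : Type*} {r : X → X → Prop} (h : ¬ WellFounded r) :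
    ∃ f : ℕ → X, ∀ n, r (f (n+1)) (f n) := by
  have hx : ∃ x, ¬ Acc r x := by
    by_contra hx
    push_neg at hx
    exact h ⟨hx⟩
  have hstep : ∀ x : {a // ¬Acc r a}, ∃ y : {a // ¬Acc r a}, r y.1 x.1 := by
    rintro ⟨x, hxa⟩
    obtain ⟨w, h1, h2⟩ := exists_not_acc_lt_of_not_acc hxa
    exact ⟨⟨w, h1⟩, h2⟩
  choose F hF using hstep
  obtain ⟨x0, hx0⟩ := hx
  refine ⟨fun n => (F^[n] ⟨x0, hx0⟩).1, fun n => ?_⟩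
  simp only [Function.iterate_succ']
  apply hF

lemma no_descending_of_wf {X : Type*} {r : X → X → Prop} (wf : WellFounded r)
    (f : ℕ → X) (hf : ∀ n, r (f (n+1)) (f n)) : False := by
  have key : ∀ a, ∀ g : ℕ → X, g 0 = a → ¬ ∀ n, r (g (n+1)) (g n) := by
    intro a
    induction a using WellFounded.induction wf with
    | _ x IH =>
      intro g hg0 hg
      exact IH (g 1) (hg0 ▸ hg 0) (fun n => g (n+1)) rfl (fun n => hg (n+1))
  exact key (f 0) f rfl hf

lemma pigeonhole_infinite {k : ℕ} (F : ℕ → Fin k) : ∃ m, {n | F n = m}.Infinite := by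
  by_contra h
  push_neg at h
  have : (Set.univ : Set ℕ) = ⋃ m, {n | F n = m} := by
    ext n
    simp
  exact Set.infinite_univ (α := ℕ) (this ▸ Set.finite_iUnion h)

/-- The relation `≺` on arrows is well-founded. -/
lemma prec_wf (hS : Ω.Simple) (hT : Ω.graph.IsTree) (hEO : Ω.EventuallyOutward)
    (hFB : Ω.FinitelyBranched) : WellFounded Ω.Prec := by
  by_contra h
  obtain ⟨f, hchain⟩ := exists_descending_of_not_wf h
  have mono : ∀ n m, n ≤ m → ∀ i, Ω.Behind (f m) i → Ω.Behind (f n) i := by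
    intro n m hnm
    induction m, hnm using Nat.le_induction with
    | base => exact fun i => id
    | succ m hm ih =>
      intro i hi
      exact ih i (behind_mono hS hT (hchain m).1.1 (hchain m).2 i hi)
  have hAB : ∀ n m, n < m → Ω.ABehind (f m) (f n) := by
    intro n m hnm
    obtain ⟨m, rfl⟩ : ∃ m', m = m' + 1 := ⟨m - 1, by omega⟩
    exact ⟨mono n m (by omega) _ (hchain m).1.1, mono n m (by omega) _ (hchain m).1.2⟩
  have hdist : ∀ n m, n < m → f m ≠ f n := by
    intro n m hnm heq
    have h1 := (hAB n m hnm).2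
    rw [heq] at h1
    exact not_behind_and_infront hS hT h1 (infront_self (f n))
  obtain ⟨k, Js, hInj, -, hA⟩ := hFB
  choose mch qch hq1 hq2 using fun n => hA (f n)
  obtain ⟨m0, hm0⟩ := pigeonhole_infinite mch
  set N := {n | mch n = m0} with hN
  set J := Js m0 with hJdef
  have hJ := hInj m0
  have hqlen : ∀ n ∈ N, ((qch n : ℕ∞)) < J.len := by
    intro n hn
    rw [hJdef, ← hn]
    exact hq1 n
  have harr : ∀ n ∈ N, J.arr (qch n) = f n := by
    intro n hn
    rw [hJdef, ← hn]
    exact hq2 n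
  have hqinj : Set.InjOn qch N := by
    intro a ha b hb hab
    by_contra hne
    have : f a = f b := by rw [← harr a ha, ← harr b hb, hab]
    rcases Nat.lt_or_ge a b with h | h
    · exact hdist a b h this.symm
    · exact hdist b a (by omega) this
  have hIncons : ∀ n ∈ N, J.Inconsistent (qch n) := by
    intro n hn
    rcases J.compat (qch n) (hqlen n hn) with ⟨hs1, ht1⟩ | ⟨hs1, ht1⟩
    swap
    · exact ⟨hs1, ht1⟩
    exfalso
    rw [harr n hn] at hs1 ht1
    have hN' : {x ∈ N | n < x}.Infinite := by
      refine Set.Infinite.mono ?_ (hm0.diff (Set.finite_Iic n))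
      intro x hx
      exact ⟨hx.1, by simpa using hx.2⟩
    obtain ⟨y, ⟨n', hn', hy⟩, hgt⟩ :=
      ((hN'.image (hqinj.mono (fun x hx => hx.1))).exists_gt (qch n + 1))
    subst hy
    have hnn' : n < n' := hn'.2
    have hn'N : n' ∈ N := hn'.1
    have hfront : Ω.InFront (f n) (J.vtx (qch n + 1)) := by
      rw [← ht1]; exact infront_self (f n)
    have hbehind : Ω.Behind (f n) (J.vtx (qch n')) := by
      rcases J.compat (qch n') (hqlen n' hn'N) with ⟨hs2, -⟩ | ⟨-, ht2⟩ <;>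
        rw [harr n' hn'N] at *
      · rw [← hs2]; exact (hAB n n' hnn').1
      · rw [← ht2]; exact (hAB n n' hnn').2
    obtain ⟨r, hr1, hr2, hr3, hr4, hr5, hr6⟩ :=
      inconsistent_of_crossing hS hT hJ (le_of_lt hgt) (le_of_lt (hqlen n' hn'N)) hfront hbehind
    rw [hr4] at hr5 hr6
    -- now hr5 : Ω.s (f n) = J.vtx (r+1), hr6 : Ω.t (f n) = J.vtx r
    have hrlen : (r : ℕ∞) ≤ J.len := le_of_lt hr3
    have hr1len : ((r + 1 : ℕ) : ℕ∞) ≤ J.len := by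
      push_cast
      exact Order.add_one_le_of_lt hr3
    have hqn1len : ((qch n + 1 : ℕ) : ℕ∞) ≤ J.len :=
      le_trans (by exact_mod_cast hr1) hrlen
    have heq1 : r = qch n + 1 := by
      apply hJ r (qch n + 1) hrlen hqn1len
      rw [← hr6, ← ht1]
    have heq2 : r + 1 = qch n := by
      apply hJ (r + 1) (qch n) hr1len (le_trans (by exact_mod_cast (by omega : qch n ≤ r)) hrlen)
      rw [← hr5, ← hs1]
    omega
  have himg : ((fun n => qch n) '' N) ⊆ {r : ℕ | (r : ℕ∞) < J.len ∧ J.Inconsistent r} := by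
    rintro r ⟨n, hn, rfl⟩
    exact ⟨hqlen n hn, hIncons n hn⟩
  exact ((hEO J hJ).subset himg).not_infinite (hm0.image hqinj)


variable (Ω) in
/-- The inward boundary arrows of a subquiver. -/
def Iset (α : Set Ω.V) : Set Ω.A := {f | Ω.t f ∈ α ∧ Ω.s f ∉ α}

lemma Iset_finite (hT : Ω.graph.IsTree) (hFB : Ω.FinitelyBranched) {α : Set Ω.V}
    (hα : Ω.ConnSub α) : (Ω.Iset α).Finite := by
  obtain ⟨k, Js, hInj, -, hA⟩ := hFB
  classical
  set Em : Fin k → Set ℕ := fun m =>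
    {n | ((n + 1 : ℕ) : ℕ∞) ≤ (Js m).len ∧ ((Js m).vtx n ∈ α ↔ (Js m).vtx (n+1) ∉ α)} with hEm
  have hEmfin : ∀ m, (Em m).Finite := by
    intro m
    have hexit : {n ∈ Em m | (Js m).vtx n ∈ α}.Subsingleton := by
      rintro x ⟨hx, hxα⟩ y ⟨hy, hyα⟩
      by_contra hne
      rcases Nat.lt_or_ge x y with h | h
      · have := journey_interval hT (hInj m) hα (Nat.le_succ x) h
          (le_trans (by exact_mod_cast Nat.le_succ y) hy.1) hxα hyα
        exact (hx.2.mp hxα) this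
      · have hlt : y < x := by omega
        have := journey_interval hT (hInj m) hα (Nat.le_succ y) hlt
          (le_trans (by exact_mod_cast Nat.le_succ x) hx.1) hyα hxα
        exact (hy.2.mp hyα) this
    have hentry : {n ∈ Em m | (Js m).vtx n ∉ α}.Subsingleton := by
      rintro x ⟨hx, hxα⟩ y ⟨hy, hyα⟩
      by_contra hne
      have hx1 : (Js m).vtx (x+1) ∈ α := by
        by_contra h
        exact hxα (hx.2.mpr h)
      have hy1 : (Js m).vtx (y+1) ∈ α := by
        by_contra h
        exact hyα (hy.2.mpr h)
      rcases Nat.lt_or_ge x y with h | h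
      · exact hyα (journey_interval hT (hInj m) hα (by omega : x + 1 ≤ y) (Nat.le_succ y)
          hy.1 hx1 hy1)
      · have hlt : y < x := by omega
        exact hxα (journey_interval hT (hInj m) hα (by omega : y + 1 ≤ x) (Nat.le_succ x)
          hx.1 hy1 hx1)
    have : Em m ⊆ {n ∈ Em m | (Js m).vtx n ∈ α} ∪ {n ∈ Em m | (Js m).vtx n ∉ α} := by
      intro n hn
      by_cases h : (Js m).vtx n ∈ α
      · exact Or.inl ⟨hn, h⟩
      · exact Or.inr ⟨hn, h⟩
    exact (hexit.finite.union hentry.finite).subset this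
  have hsub : Ω.Iset α ⊆ ⋃ m, (Js m).arr '' (Em m) := by
    rintro f ⟨htf, hsf⟩
    obtain ⟨m, n, hn1, hn2⟩ := hA f
    refine Set.mem_iUnion.mpr ⟨m, n, ?_, hn2⟩
    have hn1' : ((n + 1 : ℕ) : ℕ∞) ≤ (Js m).len := by
      push_cast
      exact Order.add_one_le_of_lt hn1
    refine ⟨hn1', ?_⟩
    rcases (Js m).compat n hn1 with ⟨h1, h2⟩ | ⟨h1, h2⟩ <;> rw [hn2] at h1 h2
    · rw [← h1, ← h2]
      simp [htf, hsf]
    · rw [← h1, ← h2]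
      simp [htf, hsf]
  exact (Set.finite_iUnion (fun m => (hEmfin m).image _)).subset hsub


section SRel

variable {X : Type} (lt : X → X → Prop)

/-- One-step set version of the Dershowitz–Manna relation: remove an element, add
elements strictly below it, and possibly drop other elements. -/
def SRel (L M : Finset X) : Prop := ∃ e ∈ M, ∀ x ∈ L, x ∈ M.erase e ∨ lt x e

variable {lt}

lemma SRel.mono_left {L L' M : Finset X} (h : L' ⊆ L) (hS : SRel lt L M) : SRel lt L' M := by
  obtain ⟨e, he, hx⟩ := hS
  exact ⟨e, he, fun x hx' => hx x (h hx')⟩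

lemma SRel.mono_right {L M M' : Finset X} (h : M ⊆ M') (hS : SRel lt L M) : SRel lt L M' := by
  obtain ⟨e, he, hx⟩ := hS
  refine ⟨e, h he, fun x hx' => ?_⟩
  rcases hx x hx' with h1 | h1
  · exact Or.inl (Finset.mem_erase.mpr ⟨(Finset.mem_erase.mp h1).1, h ((Finset.mem_erase.mp h1).2)⟩)
  · exact Or.inr h1

lemma acc_srel_subset {L M : Finset X} (h : L ⊆ M) (hM : Acc (SRel lt) M) :
    Acc (SRel lt) L :=
  Acc.intro L fun K hK => hM.inv (hK.mono_right h)

lemma acc_srel_insert (hlt : WellFounded lt) :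
    ∀ a : X, ∀ M : Finset X, Acc (SRel lt) M → Acc (SRel lt) (insert a M) := by
  classical
  intro a
  induction a using WellFounded.induction hlt with
  | _ a IH1 =>
    intro M hM
    induction hM with
    | _ M hpred IH2 =>
      have haux : ∀ T : Finset X, (∀ x ∈ T, lt x a) → Acc (SRel lt) (M ∪ T) := by
        intro T
        induction T using Finset.induction with
        | empty => simpa using Acc.intro M hpred
        | insert b T hb ih =>
          intro hT
          rw [Finset.union_insert]
          exact IH1 b (hT b (Finset.mem_insert_self b T)) _
            (ih (fun x hx => hT x (Finset.mem_insert_of_mem hx)))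
      constructor
      intro L hL
      obtain ⟨e, he, hx⟩ := hL
      rcases Finset.mem_insert.mp he with rfl | heM
      · -- the removed element is `a` (= e)
        have hLsub : L ⊆ M ∪ L.filter (fun x => lt x e) := by
          intro x hxL
          rcases hx x hxL with h1 | h1
          · rw [Finset.erase_insert_eq_erase] at h1
            exact Finset.mem_union.mpr (Or.inl (Finset.mem_of_mem_erase h1))
          · exact Finset.mem_union.mpr (Or.inr (Finset.mem_filter.mpr ⟨hxL, h1⟩))
        exact acc_srel_subset hLsub
          (haux _ (fun x hxf => (Finset.mem_filter.mp hxf).2))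
      · -- the removed element is in `M`
        have hSL' : SRel lt (L.erase a) M := by
          refine ⟨e, heM, fun x hxL' => ?_⟩
          obtain ⟨hxa, hxL⟩ := Finset.mem_erase.mp hxL'
          rcases hx x hxL with h1 | h1
          · obtain ⟨hxe, hxiM⟩ := Finset.mem_erase.mp h1
            rcases Finset.mem_insert.mp hxiM with rfl | hxM
            · exact absurd rfl hxa
            · exact Or.inl (Finset.mem_erase.mpr ⟨hxe, hxM⟩)
          · exact Or.inr h1
        have hLsub : L ⊆ insert a (L.erase a) := by
          intro x hxL
          by_cases hxa : x = a
          · exact Finset.mem_insert.mpr (Or.inl hxa)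
          · exact Finset.mem_insert.mpr (Or.inr (Finset.mem_erase.mpr ⟨hxa, hxL⟩))
        exact acc_srel_subset hLsub (IH2 _ hSL')

lemma srel_wf (hlt : WellFounded lt) : WellFounded (SRel lt) := by
  constructor
  intro M
  induction M using Finset.induction with
  | empty =>
    constructor
    intro L hL
    obtain ⟨e, he, -⟩ := hL
    exact absurd he (Finset.notMem_empty e)
  | insert _ _ _ ih =>
    exact acc_srel_insert hlt _ _ ih

end SRel


/-- Reductions do not create inward boundary arrows. -/
lemma red_Iset_subset (hS : Ω.Simple) (hT : Ω.graph.IsTree) {α β : Set Ω.V}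
    (h : Ω.Reduction α β) : Ω.Iset β ⊆ Ω.Iset α := by
  obtain ⟨e, hse, hte, rfl⟩ := h
  rintro f ⟨htf, hsf⟩
  obtain ⟨htfα, htfB⟩ := htf
  refine ⟨htfα, fun hsfα => ?_⟩
  have hsfB : ¬ Ω.Behind e (Ω.s f) := fun h => hsf ⟨hsfα, h⟩
  have hsfF : Ω.InFront e (Ω.s f) := (behind_or_infront hT e _).resolve_left hsfB
  obtain ⟨-, h2, -⟩ := arrow_eq_of_crossing hS hT (Or.inl ⟨rfl, rfl⟩) hsfF htfB
  exact hS.1 f h2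

/-- Enhancements perform a Dershowitz–Manna step on the inward boundary arrows. -/
lemma enh_Iset_step (hS : Ω.Simple) (hT : Ω.graph.IsTree) {α β : Set Ω.V}
    (hβ : Ω.ConnSub β) (h : Ω.Enhancement α β) :
    ∃ e, e ∈ Ω.Iset α ∧ ∀ f ∈ Ω.Iset β, (f ∈ Ω.Iset α ∧ f ≠ e) ∨ Ω.Prec f e := by
  obtain ⟨e, hse, hte, rfl⟩ := h
  have hsenotin : Ω.s e ∉ {i ∈ β | Ω.InFront e i} := by
    rintro ⟨-, h1⟩
    exact not_behind_and_infront hS hT (behind_self e) h1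
  refine ⟨e, ⟨⟨hte, infront_self e⟩, hsenotin⟩, ?_⟩
  rintro f ⟨htf, hsf⟩
  have hfne : f ≠ e := by
    rintro rfl
    exact hsf hse
  by_cases htfα : Ω.t f ∈ {i ∈ β | Ω.InFront e i}
  · -- `f` is still an inward boundary arrow of `α`
    refine Or.inl ⟨⟨htfα, fun h1 => hsf h1.1⟩, hfne⟩
  · -- `f` is a new arrow, behind `e`
    right
    have htfB : Ω.Behind e (Ω.t f) := by
      have : ¬ Ω.InFront e (Ω.t f) := fun h1 => htfα ⟨htf, h1⟩
      exact (behind_or_infront hT e _).resolve_right this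
    have hsfB : Ω.Behind e (Ω.s f) := by
      rcases behind_or_infront hT e (Ω.s f) with h1 | h1
      · exact h1
      · -- the arrow `f` would cross `e`, forcing `f = e`
        exfalso
        obtain ⟨hfe, -, -⟩ := arrow_eq_of_crossing hS hT (Or.inl ⟨rfl, rfl⟩) h1 htfB
        exact hfne hfe
    have hinfront := connsub_subset_infront hβ htf hsf
    exact ⟨⟨hsfB, htfB⟩, hinfront _ hse, hinfront _ hte⟩


/-- There is no infinite chain of reductions. -/
lemma no_reduction_chain (hS : Ω.Simple) (hT : Ω.graph.IsTree) (hEO : Ω.EventuallyOutward)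
    (hFB : Ω.FinitelyBranched) (α : ℕ → Set Ω.V) (hconn : ∀ n, Ω.ConnSub (α n))
    (hred : ∀ n, Ω.Reduction (α n) (α (n+1))) : False := by
  choose eseq he1 he2 he3 using hred
  have hsub : ∀ n, α (n+1) ⊆ α n := by
    intro n i hi
    rw [he3 n] at hi
    exact hi.1
  have hmono : ∀ n m, n ≤ m → α m ⊆ α n := by
    intro n m hnm
    induction m, hnm using Nat.le_induction with
    | base => exact le_refl _
    | succ m hm ih => exact (hsub m).trans ih
  have hBn : ∀ n, α (n+1) ⊆ {i | Ω.Behind (eseq n) i} := by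
    intro n i hi
    rw [he3 n] at hi
    exact hi.2
  have htnot : ∀ n, Ω.t (eseq n) ∉ α (n+1) := by
    intro n h
    exact not_behind_and_infront hS hT (hBn n h) (infront_self (eseq n))
  have hdist : ∀ n m, n < m → Ω.t (eseq m) ≠ Ω.t (eseq n) := by
    intro n m hnm heq
    exact htnot n (heq ▸ hmono (n+1) m hnm (he2 m))
  obtain ⟨k, Js, hInj, hV, -⟩ := hFB
  choose mch pch hp1 hp2 using fun n => hV (Ω.t (eseq n))
  obtain ⟨m0, hm0⟩ := pigeonhole_infinite mch
  set N := {n | mch n = m0} with hN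
  set J := Js m0 with hJdef
  have hJ := hInj m0
  have hplen : ∀ n ∈ N, ((pch n : ℕ∞)) ≤ J.len := by
    intro n hn
    rw [hJdef, ← hn]
    exact hp1 n
  have hpv : ∀ n ∈ N, J.vtx (pch n) = Ω.t (eseq n) := by
    intro n hn
    rw [hJdef, ← hn]
    exact hp2 n
  have hpinj : Set.InjOn pch N := by
    intro a ha b hb hab
    by_contra hne
    have heq : Ω.t (eseq a) = Ω.t (eseq b) := by
      rw [← hpv a ha, ← hpv b hb, hab]
    rcases Nat.lt_or_ge a b with h | h
    · exact hdist a b h heq.symm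
    · exact hdist b a (by omega) heq
  have key : ∀ n : N, ∃ r : ℕ, ((r : ℕ∞)) < J.len ∧ J.arr r = eseq n.1 ∧ J.Inconsistent r := by
    rintro ⟨n, hn⟩
    have hN' : {x ∈ N | n < x}.Infinite := by
      refine Set.Infinite.mono ?_ (hm0.diff (Set.finite_Iic n))
      intro x hx
      exact ⟨hx.1, by simpa using hx.2⟩
    obtain ⟨y, ⟨n', hn', hy⟩, hgt⟩ :=
      ((hN'.image (hpinj.mono (fun x hx => hx.1))).exists_gt (pch n))
    subst hy
    have hn'N : n' ∈ N := hn'.1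
    have hnn' : n < n' := hn'.2
    have hfront : Ω.InFront (eseq n) (J.vtx (pch n)) := by
      rw [hpv n hn]
      exact infront_self (eseq n)
    have hbehind : Ω.Behind (eseq n) (J.vtx (pch n')) := by
      rw [hpv n' hn'N]
      exact hBn n (hmono (n+1) n' hnn' (he2 n'))
    obtain ⟨r, -, -, hr3, hr4, hr5⟩ :=
      inconsistent_of_crossing hS hT hJ (le_of_lt hgt) (hplen n' hn'N) hfront hbehind
    exact ⟨r, hr3, hr4, hr5⟩
  choose rch hr1 hr2 hr3 using key
  have hedist : ∀ x y : N, x ≠ y → eseq x.1 ≠ eseq y.1 := by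
    rintro ⟨x, hx⟩ ⟨y, hy⟩ hne heq
    apply hne
    have : Ω.t (eseq x) = Ω.t (eseq y) := by rw [heq]
    rcases Nat.lt_or_ge x y with h | h
    · exact absurd this.symm (hdist x y h)
    · rcases Nat.eq_or_lt_of_le h with h' | h'
      · exact Subtype.ext h'.symm
      · exact absurd this (hdist y x h')
  have hrinj : Function.Injective rch := by
    intro x y hxy
    by_contra hne
    apply hedist x y hne
    rw [← hr2 x, ← hr2 y, hxy]
  have : Infinite N := hm0.to_subtype
  have hrange : Set.range rch ⊆ {r : ℕ | (r : ℕ∞) < J.len ∧ J.Inconsistent r} := by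
    rintro r ⟨x, rfl⟩
    exact ⟨hr1 x, hr3 x⟩
  exact ((hEO J hJ).subset hrange).not_infinite (Set.infinite_range_of_injective hrinj)


/-- The reversed one-step move relation is well-founded. -/
lemma move_wf (hS : Ω.Simple) (hT : Ω.graph.IsTree) (hEO : Ω.EventuallyOutward)
    (hFB : Ω.FinitelyBranched) : WellFounded (fun b a : Ω.CC => Ω.Move a.1 b.1) := by
  by_contra h
  obtain ⟨f, hf⟩ := exists_descending_of_not_wf h
  set msr : ℕ → Finset Ω.A := fun n => (Iset_finite hT hFB (f n).2).toFinset with hmsr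
  have hstep_red : ∀ n, Ω.Reduction (f n).1 (f (n+1)).1 → msr (n+1) ⊆ msr n := by
    intro n hredn
    rw [hmsr]
    simp only [Set.Finite.toFinset_subset_toFinset]
    exact red_Iset_subset hS hT hredn
  have hstep_enh : ∀ n, Ω.Enhancement (f n).1 (f (n+1)).1 → SRel Ω.Prec (msr (n+1)) (msr n) := by
    intro n henhn
    obtain ⟨e, he, hall⟩ := enh_Iset_step hS hT (f (n+1)).2 henhn
    refine ⟨e, by rw [hmsr]; simpa using he, fun x hx => ?_⟩
    have hx' : x ∈ Ω.Iset (f (n+1)).1 := by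
      rw [hmsr] at hx
      simpa using hx
    rcases hall x hx' with ⟨h1, h2⟩ | h1
    · exact Or.inl (Finset.mem_erase.mpr ⟨h2, by rw [hmsr]; simpa using h1⟩)
    · exact Or.inr h1
  set B : Set ℕ := {n | ¬ Ω.Reduction (f n).1 (f (n+1)).1} with hB
  by_cases hBfin : B.Finite
  · -- eventually all moves are reductions: contradiction via `no_reduction_chain`
    obtain ⟨Nb, hNb⟩ := hBfin.bddAbove
    have hredtail : ∀ n, Ω.Reduction (f (Nb + 1 + n)).1 (f (Nb + 1 + n + 1)).1 := by
      intro n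
      by_contra hcon
      have : Nb + 1 + n ∈ B := hcon
      have := hNb this
      omega
    exact no_reduction_chain hS hT hEO hFB (fun n => (f (Nb + 1 + n)).1)
      (fun n => (f (Nb + 1 + n)).2) hredtail
  · -- infinitely many enhancements: contradiction via the multiset ordering
    have hBinf : B.Infinite := hBfin
    have hBset : {n | n ∈ B}.Infinite := hBinf
    set σ : ℕ → ℕ := fun i => Nat.nth (· ∈ B) i with hσ
    have hσB : ∀ i, σ i ∈ B := fun i => Nat.nth_mem_of_infinite hBset i
    have hσlt : ∀ i, σ i < σ (i + 1) := fun i =>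
      (Nat.nth_lt_nth hBset).mpr (Nat.lt_succ_self i)
    have hσmin : ∀ i j, σ i < j → j < σ (i + 1) → j ∉ B := by
      intro i j h1 h2 hjB
      obtain ⟨m, -, hm⟩ := Nat.exists_lt_card_nth_eq (p := (· ∈ B)) hjB
      subst hm
      have hm1 : i < m := (Nat.nth_lt_nth hBset).mp h1
      have hm2 : m < i + 1 := (Nat.nth_lt_nth hBset).mp h2
      omega
    have msub : ∀ a b : ℕ, a ≤ b → (∀ j, a ≤ j → j < b → Ω.Reduction (f j).1 (f (j+1)).1) →
        msr b ⊆ msr a := by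
      intro a b hab
      induction b, hab using Nat.le_induction with
      | base => exact fun _ => le_refl _
      | succ b hb ih =>
        intro hall
        exact (hstep_red b (hall b hb (by omega))).trans
          (ih (fun j hj1 hj2 => hall j hj1 (by omega)))
    have hchain : ∀ i, SRel Ω.Prec (msr (σ (i+1) + 1)) (msr (σ i + 1)) := by
      intro i
      have henh : Ω.Enhancement (f (σ (i+1))).1 (f (σ (i+1) + 1)).1 := by
        have hmem := hσB (i+1)
        rcases hf (σ (i+1)) with h | h
        · exact absurd h hmem
        · exact h
      have hs1 : SRel Ω.Prec (msr (σ (i+1) + 1)) (msr (σ (i+1))) := hstep_enh _ henh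
      have hs2 : msr (σ (i+1)) ⊆ msr (σ i + 1) := by
        apply msub _ _ (by have := hσlt i; omega)
        intro j hj1 hj2
        by_contra hcon
        exact (hσmin i j (by omega) hj2) hcon
      exact hs1.mono_right hs2
    exact no_descending_of_wf (srel_wf (prec_wf hS hT hEO hFB))
      (fun i => msr (σ i + 1)) hchain

end Qvr

/-- Let `Ω` be an eventually outward finitely branched tree quiver and
`𝒞` the set of connected full subquivers of `Ω`.  The relation on `𝒞` given by `α > β` iff
`β` is obtained from `α` by a finite nonempty sequence of reductions and enhancements is a
well-founded strict partial order: transitive, irreflexive, asymmetric, and with no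
infinite strictly decreasing chains (i.e. the converse relation `<` is well-founded). -/
theorem stmt4 (Ω : Qvr) (hS : Ω.Simple) (hT : Ω.graph.IsTree)
    (hEO : Ω.EventuallyOutward) (hFB : Ω.FinitelyBranched) :
    (∀ a b c : Ω.CC, Ω.GtC a b → Ω.GtC b c → Ω.GtC a c) ∧
    (∀ a : Ω.CC, ¬Ω.GtC a a) ∧
    (∀ a b : Ω.CC, Ω.GtC a b → ¬Ω.GtC b a) ∧
    WellFounded (fun b a : Ω.CC => Ω.GtC a b) := by
  have hwfM := Qvr.move_wf hS hT hEO hFB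
  have hwfT : WellFounded (Relation.TransGen (fun b a : Ω.CC => Ω.Move a.1 b.1)) :=
    hwfM.transGen
  have heq : (fun b a : Ω.CC => Ω.GtC a b) =
      Relation.TransGen (fun b a : Ω.CC => Ω.Move a.1 b.1) := by
    funext b a
    exact propext
      (Relation.transGen_swap (r := fun x y : Ω.CC => Ω.Move x.1 y.1) (a := b) (b := a)).symm
  have hwf4 : WellFounded (fun b a : Ω.CC => Ω.GtC a b) := heq ▸ hwfT
  refine ⟨fun a b c hab hbc => hab.trans hbc, ?_, ?_, hwf4⟩
  · exact fun a h => hwf4.asymmetric _ _ h h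
  · exact fun a b h1 h2 => hwf4.asymmetric _ _ h1 h2
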